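/- Let k, d, n be natural numbers with k ≥ 1, d ≥ 0 and n ≥ 2. If n is odd, then δ(k,d,n) = 0 if and only if k = d + 1. -/
import Mathlib


def delta (k d n : ℕ) : ℤ :=
  ∑ i ∈ Finset.range (n + 1), ∑ j ∈ Finset.range (n - i + 1),
    (Nat.choose (n + 1) (n - i - j) : ℤ) * (-(k : ℤ)) ^ j * ((d : ℤ) - 1) ^ i

open Finset

/-- Triangle reindexing. -/
lemma tri_sum (n : ℕ) (f : ℕ → ℕ → ℤ) :
    ∑ i ∈ range (n + 1), ∑ j ∈ range (n - i + 1), f i j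
      = ∑ s ∈ range (n + 1), ∑ i ∈ range (s + 1), f i (s - i) := by
  rw [Finset.sum_sigma', Finset.sum_sigma']
  refine Finset.sum_nbij' (fun p => ⟨p.1 + p.2, p.1⟩) (fun p => ⟨p.2, p.1 - p.2⟩) ?_ ?_ ?_ ?_ ?_
  · rintro ⟨a, b⟩ h
    simp only [mem_sigma, mem_range] at h ⊢; omega
  · rintro ⟨a, b⟩ h
    simp only [mem_sigma, mem_range] at h ⊢; omega
  · rintro ⟨a, b⟩ h; simp
  · rintro ⟨a, b⟩ h
    simp only [mem_sigma, mem_range] at h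
    have hba : b + (a - b) = a := by omega
    simp [hba]
  · rintro ⟨a, b⟩ h
    simp

lemma delta_eq (k d n : ℕ) :
    delta k d n = ∑ s ∈ range (n + 1), (Nat.choose (n + 1) (n - s) : ℤ) *
      ∑ i ∈ range (s + 1), ((d : ℤ) - 1) ^ i * (-(k : ℤ)) ^ (s - i) := by
  rw [delta, tri_sum]
  refine Finset.sum_congr rfl fun s hs => ?_
  rw [Finset.mul_sum]
  refine Finset.sum_congr rfl fun i hi => ?_
  simp only [mem_range] at hs hi
  have h1 : n - i - (s - i) = n - s := by omega
  rw [h1]; ring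

lemma delta_mul (k d n : ℕ) :
    delta k d n * ((d : ℤ) + k - 1) = (d : ℤ) ^ (n + 1) - (1 - (k : ℤ)) ^ (n + 1) := by
  set x : ℤ := -(k : ℤ) with hx
  set y : ℤ := (d : ℤ) - 1 with hy
  have hyx : y - x = (d : ℤ) + k - 1 := by rw [hx, hy]; ring
  rw [← hyx, delta_eq, Finset.sum_mul]
  have hstep : ∀ s ∈ range (n + 1),
      (Nat.choose (n + 1) (n - s) : ℤ) * (∑ i ∈ range (s + 1), y ^ i * x ^ (s - i)) * (y - x)
        = (Nat.choose (n + 1) (n - s) : ℤ) * (y ^ (s + 1) - x ^ (s + 1)) := by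
    intro s _
    have hg : (∑ i ∈ range (s + 1), y ^ i * x ^ (s + 1 - 1 - i)) * (y - x)
        = y ^ (s + 1) - x ^ (s + 1) := geom_sum₂_mul y x (s + 1)
    simp only [Nat.add_sub_cancel] at hg
    rw [mul_assoc, hg]
  rw [Finset.sum_congr rfl hstep]
  have hds : (d : ℤ) = y + 1 := by rw [hy]; ring
  have hks : (1 : ℤ) - (k : ℤ) = x + 1 := by rw [hx]; ring
  rw [hds, hks, add_pow y 1 (n + 1), add_pow x 1 (n + 1)]
  rw [← Finset.sum_sub_distrib]
  rw [Finset.sum_range_succ' (fun t => y ^ t * 1 ^ (n + 1 - t) * ((n + 1).choose t : ℤ)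
    - x ^ t * 1 ^ (n + 1 - t) * ((n + 1).choose t : ℤ)) (n + 1)]
  simp only [one_pow, mul_one, pow_zero, sub_self, add_zero]
  refine Finset.sum_congr rfl fun s hs => ?_
  simp only [mem_range] at hs
  have hc : (n + 1).choose (s + 1) = (n + 1).choose (n - s) := by
    rw [← Nat.choose_symm (by omega : s + 1 ≤ n + 1)]
    congr 1; omega
  rw [hc]; ring

lemma delta_one_zero (n : ℕ) (hn : 1 ≤ n) : delta 1 0 n = 0 := by
  have h : delta 1 0 n = ∑ s ∈ range (n + 1),
      (Nat.choose (n + 1) (n - s) : ℤ) * ((s + 1) * (-1) ^ s) := by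
    rw [delta_eq]
    refine Finset.sum_congr rfl fun s hs => ?_
    congr 1
    push_cast
    have : ∀ i ∈ range (s + 1),
        (-(1 : ℤ)) ^ i * (-(1 : ℤ)) ^ (s - i) = (-1) ^ s := by
      intro i hi
      simp only [mem_range] at hi
      rw [← pow_add]
      congr 1; omega
    rw [Finset.sum_congr rfl this, Finset.sum_const, card_range]
    ring
  rw [h]
  have hA : ∑ u ∈ range (n + 2), (-1 : ℤ) ^ u * u * ((n + 1).choose u : ℤ) = 0 := by
    rw [Finset.sum_range_succ' (fun u => (-1 : ℤ) ^ u * u * ((n + 1).choose u : ℤ)) (n + 1)]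
    simp only [Nat.cast_zero, mul_zero, zero_mul, add_zero, pow_zero]
    have hterm : ∀ v ∈ range (n + 1),
        (-1 : ℤ) ^ (v + 1) * (v + 1 : ℕ) * ((n + 1).choose (v + 1) : ℤ)
          = -(n + 1) * ((-1 : ℤ) ^ v * (n.choose v : ℤ)) := by
      intro v _
      have := Nat.add_one_mul_choose_eq n v
      have hc : ((n + 1).choose (v + 1) : ℤ) * (v + 1) = (n + 1) * (n.choose v : ℤ) := by
        exact_mod_cast congrArg (Nat.cast (R := ℤ)) this.symm
      rw [pow_succ]
      push_cast
      linear_combination (-(-1 : ℤ) ^ v) * hc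
    rw [Finset.sum_congr rfl hterm, ← Finset.mul_sum]
    have := Int.alternating_sum_range_choose_of_ne (n := n) (by omega)
    rw [this, mul_zero]
  have hT : ∑ s ∈ range (n + 1), (Nat.choose (n + 1) (n - s) : ℤ) * ((s + 1) * (-1) ^ s)
      = -∑ u ∈ range (n + 2), (-1 : ℤ) ^ u * u * ((n + 1).choose u : ℤ) := by
    rw [Finset.sum_range_succ' (fun u => (-1 : ℤ) ^ u * u * ((n + 1).choose u : ℤ)) (n + 1)]
    simp only [Nat.cast_zero, mul_zero, zero_mul, add_zero, pow_zero]
    rw [← Finset.sum_neg_distrib]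
    refine Finset.sum_congr rfl fun s hs => ?_
    simp only [mem_range] at hs
    have hc : (n + 1).choose (n - s) = (n + 1).choose (s + 1) := by
      rw [← Nat.choose_symm (by omega : s + 1 ≤ n + 1)]
      congr 1; omega
    rw [hc, pow_succ]
    push_cast; ring
  rw [hT, hA, neg_zero]

theorem delta_eq_zero_iff_of_odd (k d n : ℕ) (hk : 1 ≤ k) (hn : 2 ≤ n) (hodd : Odd n) :
    delta k d n = 0 ↔ k = d + 1 := by
  have hkey := delta_mul k d n
  have heven : Even (n + 1) := Odd.add_one hodd
  have hpow : (1 - (k : ℤ)) ^ (n + 1) = ((k : ℤ) - 1) ^ (n + 1) := by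
    rw [show (1 - (k : ℤ)) = -((k : ℤ) - 1) by ring, heven.neg_pow]
  rw [hpow] at hkey
  by_cases hc : (d : ℤ) + k - 1 = 0
  · have hdk : d = 0 ∧ k = 1 := by
      have : (d : ℤ) + k = 1 := by linarith
      have h2 : d + k = 1 := by exact_mod_cast this
      omega
    obtain ⟨hd0, hk1⟩ := hdk
    subst hd0 hk1
    simp only [delta_one_zero n (by omega)]
  · constructor
    · intro h0
      rw [h0, zero_mul] at hkey
      have hpows : (d : ℤ) ^ (n + 1) = ((k : ℤ) - 1) ^ (n + 1) := by linarith
      have hcast : ((k : ℤ) - 1) = ((k - 1 : ℕ) : ℤ) := by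
        have : (1 : ℕ) ≤ k := hk
        push_cast [this]; ring
      rw [hcast] at hpows
      have hnat : d ^ (n + 1) = (k - 1) ^ (n + 1) := by exact_mod_cast hpows
      have := Nat.pow_left_injective (by omega) hnat
      omega
    · intro hkd
      subst hkd
      have hkey' : delta (d + 1) d n * ((d : ℤ) + (d + 1 : ℕ) - 1) = 0 := by
        rw [hkey]; push_cast; ring
      rcases mul_eq_zero.mp hkey' with h | h
      · exact h
      · exact absurd h hc
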